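/- arXiv:2302.04037 — 10 statements merged into one kernel-verified Lean document; each statement's English description precedes it below -/
import Mathlib

section
/- If f : ℕ → ℂ is multiplicative (f(1)=1 and f(mn)=f(m)f(n) for coprime m,n) with f(0)=0 and satisfies f(p+q)+f(p−q)=2f(p)+2f(q) for all primes p ≥ q, then f(2)=4. -/
theorem stmt_0 (f : ℕ → ℂ) (hf0 : f 0 = 0) (hf1 : f 1 = 1)
    (hmul : ∀ m n : ℕ, Nat.Coprime m n → f (m * n) = f m * f n)
    (hpara : ∀ p q : ℕ, Nat.Prime p → Nat.Prime q → q ≤ p →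
      f (p + q) + f (p - q) = 2 * f p + 2 * f q) :
    f 2 = 4 := by
  have h32 := hpara 3 2 (by norm_num) (by norm_num) (by norm_num)
  have h52 := hpara 5 2 (by norm_num) (by norm_num) (by norm_num)
  have h33 := hpara 3 3 (by norm_num) (by norm_num) le_rfl
  have h55 := hpara 5 5 (by norm_num) (by norm_num) le_rfl
  have h77 := hpara 7 7 (by norm_num) (by norm_num) le_rfl
  norm_num [hf0, hf1] at h32 h52 h33 h55 h77
  have m6 : f 6 = f 2 * f 3 := hmul 2 3 (by norm_num)
  have m10 : f 10 = f 2 * f 5 := hmul 2 5 (by norm_num)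
  have m14 : f 14 = f 2 * f 7 := hmul 2 7 (by norm_num)
  by_cases h3 : f 3 = 0
  · by_cases h5 : f 5 = 0
    · -- derive contradiction
      have hx : f 2 = 1/2 := by linear_combination (-(1:ℂ)/2) * h32 + (1/2) * h5 - h3
      have hf7 : f 7 = 2 * f 2 := by linear_combination h52 - h3 + 2 * h5
      have key : f 2 * f 7 = 4 * f 7 := by linear_combination h77 - m14
      have hy : f 7 = 1 := by rw [hx] at hf7; norm_num [hf7]
      rw [hx, hy] at key
      norm_num at key
    · have key : f 2 * f 5 = 4 * f 5 := by linear_combination h55 - m10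
      exact mul_right_cancel₀ h5 key
  · have key : f 2 * f 3 = 4 * f 3 := by linear_combination h33 - m6
    exact mul_right_cancel₀ h3 key
end

section
/- If f : ℕ → ℂ is multiplicative with f(0)=0 and satisfies the parallelogram equation f(p+q)+f(p−q)=2f(p)+2f(q) for all primes p ≥ q, then f(3)=9. -/
theorem stmt_1 (f : ℕ → ℂ) (hf0 : f 0 = 0) (hf1 : f 1 = 1)
    (hmul : ∀ m n : ℕ, Nat.Coprime m n → f (m * n) = f m * f n)
    (hpara : ∀ p q : ℕ, Nat.Prime p → Nat.Prime q → q ≤ p →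
      f (p + q) + f (p - q) = 2 * f p + 2 * f q) :
    f 3 = 9 := by
  have p2 : Nat.Prime 2 := by norm_num
  have p3 : Nat.Prime 3 := by norm_num
  have p5 : Nat.Prime 5 := by norm_num
  have p7 : Nat.Prime 7 := by norm_num
  have h22 := hpara 2 2 p2 p2 (by norm_num)
  have h33 := hpara 3 3 p3 p3 (by norm_num)
  have h32 := hpara 3 2 p3 p2 (by norm_num)
  have h52 := hpara 5 2 p5 p2 (by norm_num)
  have h75 := hpara 7 5 p7 p5 (by norm_num)
  have h73 := hpara 7 3 p7 p3 (by norm_num)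
  have h55 := hpara 5 5 p5 p5 (by norm_num)
  norm_num [hf0, hf1] at h22 h33 h32 h52 h75 h73 h55
  have m23 : f 6 = f 2 * f 3 := by
    have := hmul 2 3 (by norm_num); norm_num at this; exact this
  have m43 : f 12 = f 4 * f 3 := by
    have := hmul 4 3 (by norm_num); norm_num at this; exact this
  have m25 : f 10 = f 2 * f 5 := by
    have := hmul 2 5 (by norm_num); norm_num at this; exact this
  by_cases hb : f 3 = 0
  · exfalso
    -- with b = 0 : c = 2a - 1, d = 2c + 2a, a = 2d + 2c, ac = 4c
    have hB : f 5 = 2 * f 2 - 1 := by linear_combination h32 + 2 * hb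
    have hC : f 7 = 2 * f 5 + 2 * f 2 := by linear_combination h52 - hb
    have h12 : f 12 = 0 := by
      rw [m43, hb, mul_zero]
    have hD : f 2 = 2 * f 7 + 2 * f 5 := by linear_combination h75 - h12
    have hF : f 2 * f 5 = 4 * f 5 := by linear_combination h55 - m25
    have ha : f 2 = 2/5 := by linear_combination (-1/15) * hD - (2/15) * hC - (2/5) * hB
    have hc : f 5 = -1/5 := by rw [ha] at hB; linear_combination hB
    rw [ha, hc] at hF
    norm_num at hF
  · have ha : f 2 = 4 := by
      have hA : f 2 * f 3 = 4 * f 3 := by linear_combination h33 - m23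
      exact mul_right_cancel₀ hb hA
    have h12b : f 12 = 16 * f 3 := by
      rw [m43]
      have h4 : f 4 = 4 * f 2 := by linear_combination h22
      rw [h4, ha]; ring
    rw [ha] at h32 h52 h75
    linear_combination (1/6) * h75 + (1/3) * h52 + h32 - (1/6) * h12b
end

section
/- If f : ℕ → ℂ is multiplicative with f(0)=0 and satisfies the parallelogram equation on primes, and f(2) ≠ 4, then f(p)=0 for every odd prime p. -/
theorem stmt_2 (f : ℕ → ℂ) (hf0 : f 0 = 0) (hf1 : f 1 = 1)
    (hmul : ∀ m n : ℕ, Nat.Coprime m n → f (m * n) = f m * f n)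
    (hpara : ∀ p q : ℕ, Nat.Prime p → Nat.Prime q → q ≤ p →
      f (p + q) + f (p - q) = 2 * f p + 2 * f q) (h2 : f 2 ≠ 4) :
    ∀ p : ℕ, Nat.Prime p → Odd p → f p = 0 := by
  intro p hp hop
  have h := hpara p p hp hp le_rfl
  rw [Nat.sub_self, hf0] at h
  have hc : Nat.Coprime 2 p := Nat.coprime_two_left.mpr hop
  have h2p : f (p + p) = f 2 * f p := by rw [← two_mul, hmul 2 p hc]
  rw [h2p] at h
  have key : (f 2 - 4) * f p = 0 := by ring_nf; linear_combination h
  rcases mul_eq_zero.mp key with h' | h'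
  · exact absurd (by linear_combination h') h2
  · exact h'
end

section
/- If f : ℕ → ℂ is multiplicative with f(0)=0 and satisfies the parallelogram equation on primes, then f(11) = 121 and f(14) = 196. -/
theorem stmt_6 (f : ℕ → ℂ) (hf0 : f 0 = 0) (hf1 : f 1 = 1)
    (hmul : ∀ m n : ℕ, Nat.Coprime m n → f (m * n) = f m * f n)
    (hpara : ∀ p q : ℕ, Nat.Prime p → Nat.Prime q → q ≤ p →
      f (p + q) + f (p - q) = 2 * f p + 2 * f q) :
    f 11 = 121 ∧ f 14 = 196 := by
  have p2 : Nat.Prime 2 := by norm_num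
  have p3 : Nat.Prime 3 := by norm_num
  have p5 : Nat.Prime 5 := by norm_num
  have p7 : Nat.Prime 7 := by norm_num
  have p11 : Nat.Prime 11 := by norm_num
  have E32 := hpara 3 2 p3 p2 (by norm_num)
  have E22 := hpara 2 2 p2 p2 le_rfl
  have E33 := hpara 3 3 p3 p3 le_rfl
  have E55 := hpara 5 5 p5 p5 le_rfl
  have E77 := hpara 7 7 p7 p7 le_rfl
  have E52 := hpara 5 2 p5 p2 (by norm_num)
  have E72 := hpara 7 2 p7 p2 (by norm_num)
  have E75 := hpara 7 5 p7 p5 (by norm_num)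
  have E117 := hpara 11 7 p11 p7 (by norm_num)
  norm_num at E32 E22 E33 E55 E77 E52 E72 E75 E117
  have M23 : f 6 = f 2 * f 3 := hmul 2 3 (by decide)
  have M25 : f 10 = f 2 * f 5 := hmul 2 5 (by decide)
  have M27 : f 14 = f 2 * f 7 := hmul 2 7 (by decide)
  have M34 : f 12 = f 3 * f 4 := hmul 3 4 (by decide)
  have M29 : f 18 = f 2 * f 9 := hmul 2 9 (by decide)
  have ha : f 2 = 4 := by
    by_contra h
    have h4 : f 2 - 4 ≠ 0 := sub_ne_zero.mpr h
    have h5 : f 5 = 0 := by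
      have : (f 2 - 4) * f 5 = 0 := by linear_combination E55 - M25 - hf0
      rcases mul_eq_zero.mp this with h' | h'
      · exact absurd h' h4
      · exact h'
    have h7 : f 7 = 0 := by
      have : (f 2 - 4) * f 7 = 0 := by linear_combination E77 - M27 - hf0
      rcases mul_eq_zero.mp this with h' | h'
      · exact absurd h' h4
      · exact h'
    have h3 : f 3 = 0 := by
      have : (f 2 - 4) * f 3 = 0 := by linear_combination E33 - M23 - hf0
      rcases mul_eq_zero.mp this with h' | h'
      · exact absurd h' h4
      · exact h'
    have h2 : f 2 = 0 := by linear_combination (h7 + h3 - 2 * h5 - E52) / 2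
    have : (1 : ℂ) = 0 := by linear_combination E32 - h5 - hf1 + 2 * h3 + 2 * h2
    exact one_ne_zero this
  have h4 : f 4 = 16 := by linear_combination E22 - hf0 + 4 * ha
  have h5e : f 5 = 2 * f 3 + 7 := by linear_combination E32 - hf1 + 2 * ha
  have h7e : f 7 = 3 * f 3 + 22 := by linear_combination E52 + 2 * ha + 2 * h5e
  have h12 : f 12 = 16 * f 3 := by rw [M34, h4]; ring
  have hb : f 3 = 9 := by
    linear_combination (E75 - h12 - ha + 2 * h7e + 2 * h5e) / 6
  have h5 : f 5 = 25 := by linear_combination h5e + 2 * hb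
  have h7 : f 7 = 49 := by linear_combination h7e + 3 * hb
  have h9 : f 9 = 81 := by linear_combination E72 - h5 + 2 * h7 + 2 * ha
  have h18 : f 18 = 324 := by rw [M29, ha, h9]; norm_num
  have h11 : f 11 = 121 := by linear_combination (h18 + h4 - 2 * h7 - E117) / 2
  have h14 : f 14 = 196 := by rw [M27, ha, h7]; norm_num
  exact ⟨h11, h14⟩
end

section
/- If f : ℕ → ℂ is multiplicative with f(0)=0 and satisfies the parallelogram equation on primes, then f(17) = 289. -/
theorem stmt_7 (f : ℕ → ℂ) (hf0 : f 0 = 0) (hf1 : f 1 = 1)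
    (hmul : ∀ m n : ℕ, Nat.Coprime m n → f (m * n) = f m * f n)
    (hpara : ∀ p q : ℕ, Nat.Prime p → Nat.Prime q → q ≤ p →
      f (p + q) + f (p - q) = 2 * f p + 2 * f q) :
    f 17 = 289 := by
  have p2 : Nat.Prime 2 := by norm_num
  have p3 : Nat.Prime 3 := by norm_num
  have p5 : Nat.Prime 5 := by norm_num
  have p7 : Nat.Prime 7 := by norm_num
  have p17 : Nat.Prime 17 := by norm_num
  have h22 := hpara 2 2 p2 p2 (by norm_num)
  have h33 := hpara 3 3 p3 p3 (by norm_num)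
  have h32 := hpara 3 2 p3 p2 (by norm_num)
  have h52 := hpara 5 2 p5 p2 (by norm_num)
  have h55 := hpara 5 5 p5 p5 (by norm_num)
  have h75 := hpara 7 5 p7 p5 (by norm_num)
  have h173 := hpara 17 3 p17 p3 (by norm_num)
  norm_num at h22 h33 h32 h52 h55 h75 h173
  rw [hf0] at h22 h33 h55
  rw [hf1] at h32
  have m6 : f 6 = f 2 * f 3 := hmul 2 3 (by norm_num)
  have m10 : f 10 = f 2 * f 5 := hmul 2 5 (by norm_num)
  have m12 : f 12 = f 4 * f 3 := hmul 4 3 (by norm_num)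
  have m14 : f 14 = f 2 * f 7 := hmul 2 7 (by norm_num)
  have m20 : f 20 = f 4 * f 5 := hmul 4 5 (by norm_num)
  -- abbreviations
  set a := f 2
  set b := f 3
  set c := f 5
  set d := f 7
  have e4 : f 4 = 4 * a := by linear_combination h22
  have E2 : a * b = 4 * b := by linear_combination m6.symm + h33
  have E3 : c = 2 * b + 2 * a - 1 := by linear_combination h32
  have E4 : a * c = 4 * c := by linear_combination m10.symm + h55
  have E5 : d + b = 2 * c + 2 * a := by linear_combination h52
  have E6 : 4 * a * b + a = 2 * d + 2 * c := by
    linear_combination h75 - m12 - b * e4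
  have E7 : 2 * f 17 = 4 * a * c + a * d - 2 * b := by
    linear_combination -h173 + m20 + m14 + c * e4
  by_cases hb : b = 0
  · -- contradiction branch
    have ha : a = 2 / 5 := by linear_combination (-1/15 : ℂ) * E6 + (-2/15 : ℂ) * E5 + (-2/5 : ℂ) * E3 + (4*a/15 - 2/3) * hb
    have hc : c = -1 / 5 := by linear_combination E3 + 2 * hb + 2 * ha
    have : (2/5 : ℂ) * (-1/5) = 4 * (-1/5) := by rw [← ha, ← hc]; exact E4
    norm_num at this
  · have ha : a = 4 := by
      have : (a - 4) * b = 0 := by linear_combination E2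
      rcases mul_eq_zero.mp this with h | h
      · linear_combination h
      · exact absurd h hb
    have hb9 : b = 9 := by linear_combination (E6 + 2 * E5 + 6 * E3 + (15 - 4*b) * ha) / 6
    have hc : c = 25 := by linear_combination E3 + 2 * hb9 + 2 * ha
    have hd : d = 49 := by linear_combination E5 - hb9 + 2 * hc + 2 * ha
    linear_combination (E7 + (4*c + d) * ha + 16 * hc + 4 * hd - 2 * hb9) / 2
end

section
/- If f : ℕ → ℂ is multiplicative with f(0)=0 and satisfies the parallelogram equation on primes, then f(n) = n² for all natural numbers n ≤ 20. -/
theorem stmt_8 (f : ℕ → ℂ) (hf0 : f 0 = 0) (hf1 : f 1 = 1)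
    (hmul : ∀ m n : ℕ, Nat.Coprime m n → f (m * n) = f m * f n)
    (hpara : ∀ p q : ℕ, Nat.Prime p → Nat.Prime q → q ≤ p →
      f (p + q) + f (p - q) = 2 * f p + 2 * f q) :
    ∀ n : ℕ, n ≤ 20 → 0 < n → f n = (n : ℂ) ^ 2 := by
  have e22 := hpara 2 2 (by norm_num) (by norm_num) (by norm_num)
  have e32 := hpara 3 2 (by norm_num) (by norm_num) (by norm_num)
  have e33 := hpara 3 3 (by norm_num) (by norm_num) (by norm_num)
  have e52 := hpara 5 2 (by norm_num) (by norm_num) (by norm_num)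
  have e53 := hpara 5 3 (by norm_num) (by norm_num) (by norm_num)
  have e55 := hpara 5 5 (by norm_num) (by norm_num) (by norm_num)
  have e72 := hpara 7 2 (by norm_num) (by norm_num) (by norm_num)
  have e75 := hpara 7 5 (by norm_num) (by norm_num) (by norm_num)
  have e113 := hpara 11 3 (by norm_num) (by norm_num) (by norm_num)
  have e115 := hpara 11 5 (by norm_num) (by norm_num) (by norm_num)
  have e133 := hpara 13 3 (by norm_num) (by norm_num) (by norm_num)
  have e173 := hpara 17 3 (by norm_num) (by norm_num) (by norm_num)
  have e172 := hpara 17 2 (by norm_num) (by norm_num) (by norm_num)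
  norm_num at e22 e32 e33 e52 e53 e55 e72 e75 e113 e115 e133 e173 e172
  have h6m := hmul 2 3 (by norm_num)
  have h10m := hmul 2 5 (by norm_num)
  have h12m := hmul 3 4 (by norm_num)
  have h14m := hmul 2 7 (by norm_num)
  have h15m := hmul 3 5 (by norm_num)
  have h18m := hmul 2 9 (by norm_num)
  have h20m := hmul 4 5 (by norm_num)
  norm_num at h6m h10m h12m h14m h15m h18m h20m
  have A : f 2 * f 3 = 4 * f 3 := by linear_combination e33 - h6m - hf0
  by_cases h3 : f 3 = 0
  · exfalso
    rw [h3, zero_mul] at h12m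
    rw [h12m] at e75
    rw [h3] at e52
    rw [hf1, h3] at e32
    have ha : f 2 = 2 / 5 := by
      linear_combination (-1/15 : ℂ) * e75 + (-2/15 : ℂ) * e52 + (-2/5 : ℂ) * e32
    have hb : f 5 = -1 / 5 := by linear_combination e32 + 2 * ha
    rw [h10m, hf0, ha, hb] at e55
    norm_num at e55
  · have h2 : f 2 = 4 := mul_right_cancel₀ h3 A
    have h4 : f 4 = 16 := by linear_combination e22 - hf0 + 4 * h2
    rw [h12m, h4, h2] at e75
    rw [h2] at e52
    rw [hf1, h2] at e32
    have h3v : f 3 = 9 := by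
      linear_combination (1/6 : ℂ) * e75 + (1/3 : ℂ) * e52 + e32
    rw [h3v] at e32
    have h5 : f 5 = 25 := by linear_combination e32
    rw [h3v, h5] at e52
    have h7 : f 7 = 49 := by linear_combination e52
    rw [h2, h3v] at h6m
    have h6 : f 6 = 36 := by linear_combination h6m
    rw [h2, h5, h3v] at e53
    have h8 : f 8 = 64 := by linear_combination e53
    rw [h5, h7, h2] at e72
    have h9 : f 9 = 81 := by linear_combination e72
    rw [h2, h5] at h10m
    have h10 : f 10 = 100 := by linear_combination h10m
    rw [h3v, h4] at h12m
    have h12 : f 12 = 144 := by linear_combination h12m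
    rw [h2, h7] at h14m
    have h14 : f 14 = 196 := by linear_combination h14m
    rw [h14, h8, h3v] at e113
    have h11 : f 11 = 121 := by linear_combination (-1/2 : ℂ) * e113
    rw [h3v, h5] at h15m
    have h15 : f 15 = 225 := by linear_combination h15m
    rw [h6, h11, h5] at e115
    have h16 : f 16 = 256 := by linear_combination e115
    rw [h16, h10, h3v] at e133
    have h13 : f 13 = 169 := by linear_combination (-1/2 : ℂ) * e133
    rw [h2, h9] at h18m
    have h18 : f 18 = 324 := by linear_combination h18m
    rw [h4, h5] at h20m
    have h20 : f 20 = 400 := by linear_combination h20m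
    rw [h20, h14, h3v] at e173
    have h17 : f 17 = 289 := by linear_combination (-1/2 : ℂ) * e173
    rw [h15, h17, h2] at e172
    have h19 : f 19 = 361 := by linear_combination e172
    intro n hn hpos
    interval_cases n <;>
      norm_num [hf1, h2, h3v, h4, h5, h6, h7, h8, h9, h10, h11, h12, h13,
        h14, h15, h16, h17, h18, h19, h20]
end

section
/- Let f : ℕ → ℂ be multiplicative with f(0)=0, satisfying the parallelogram equation on primes, and suppose f(n)=n² for all n ≤ N where N ≥ 20. If p is a prime with 20 < p ≤ 2N−3, then f(p)=p². -/
lemma key_12 (f : ℕ → ℂ)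
    (hmul : ∀ m n : ℕ, Nat.Coprime m n → f (m * n) = f m * f n)
    (hpara : ∀ p q : ℕ, Nat.Prime p → Nat.Prime q → q ≤ p →
      f (p + q) + f (p - q) = 2 * f p + 2 * f q) (N : ℕ) (hN : 20 ≤ N)
    (hind : ∀ n : ℕ, n ≤ N → f n = (n : ℂ) ^ 2)
    (p : ℕ) (hp : Nat.Prime p) (hp1 : 20 < p) (hp2 : p ≤ 2 * N - 3)
    (r : ℕ) (hr : Nat.Prime r) (hr17 : r ≤ 17) (hrodd : r % 2 = 1)
    (h8 : (p + r) % 8 = 4) : f p = (p : ℂ) ^ 2 := by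
  have hr3 : 3 ≤ r := by have := hr.two_le; omega
  have hrp : r < p := by omega
  obtain ⟨k, hk⟩ : ∃ k, p + r = 8 * k + 4 := ⟨(p + r) / 8, by omega⟩
  have ha : p + r = 4 * (2 * k + 1) := by omega
  have hb : p - r = 2 * (4 * k + 2 - r) := by omega
  have haN : 2 * k + 1 ≤ N := by omega
  have hbN : 4 * k + 2 - r ≤ N := by omega
  have hcop4 : Nat.Coprime 4 (2 * k + 1) := by
    have : Nat.Coprime 2 (2 * k + 1) :=
      (Nat.prime_two.coprime_iff_not_dvd).mpr (by omega)
    simpa using this.pow_left 2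
  have hcop2 : Nat.Coprime 2 (4 * k + 2 - r) := by
    exact (Nat.prime_two.coprime_iff_not_dvd).mpr (by omega)
  have h1 : f (p + r) = f 4 * f (2 * k + 1) := by rw [ha]; exact hmul _ _ hcop4
  have h2 : f (p - r) = f 2 * f (4 * k + 2 - r) := by rw [hb]; exact hmul _ _ hcop2
  have e4 : f 4 = 16 := by rw [hind 4 (by omega)]; norm_num
  have e2 : f 2 = 4 := by rw [hind 2 (by omega)]; norm_num
  have ea : f (2 * k + 1) = ((2 * k + 1 : ℕ) : ℂ) ^ 2 := hind _ haN
  have eb : f (4 * k + 2 - r) = ((4 * k + 2 - r : ℕ) : ℂ) ^ 2 := hind _ hbN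
  have er : f r = (r : ℂ) ^ 2 := hind r (by omega)
  have E := hpara p r hp hr hrp.le
  rw [h1, h2, e4, e2, ea, eb, er] at E
  have hcb : ((4 * k + 2 - r : ℕ) : ℂ) = 4 * k + 2 - (r : ℂ) := by
    have : r ≤ 4 * k + 2 := by omega
    push_cast [Nat.cast_sub this]; ring
  have hpc : (p : ℂ) = 8 * k + 4 - (r : ℂ) := by
    have : ((p + r : ℕ) : ℂ) = ((8 * k + 4 : ℕ) : ℂ) := by rw [hk]
    push_cast at this; linear_combination this
  rw [hcb] at E
  rw [hpc]
  push_cast at E ⊢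
  linear_combination -E / 2

theorem stmt_12 (f : ℕ → ℂ) (hf0 : f 0 = 0) (hf1 : f 1 = 1)
    (hmul : ∀ m n : ℕ, Nat.Coprime m n → f (m * n) = f m * f n)
    (hpara : ∀ p q : ℕ, Nat.Prime p → Nat.Prime q → q ≤ p →
      f (p + q) + f (p - q) = 2 * f p + 2 * f q) (N : ℕ) (hN : 20 ≤ N)
    (hind : ∀ n : ℕ, n ≤ N → f n = (n : ℂ) ^ 2)
    (p : ℕ) (hp : Nat.Prime p) (hp1 : 20 < p) (hp2 : p ≤ 2 * N - 3) :
    f p = (p : ℂ) ^ 2 := by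
  have hodd : p % 2 = 1 := Nat.odd_iff.mp (hp.odd_of_ne_two (by omega))
  have : p % 8 = 1 ∨ p % 8 = 3 ∨ p % 8 = 5 ∨ p % 8 = 7 := by omega
  rcases this with h | h | h | h
  · exact key_12 f hmul hpara N hN hind p hp hp1 hp2 3 (by norm_num) (by norm_num)
      (by norm_num) (by omega)
  · exact key_12 f hmul hpara N hN hind p hp hp1 hp2 17 (by norm_num) (by norm_num)
      (by norm_num) (by omega)
  · exact key_12 f hmul hpara N hN hind p hp hp1 hp2 7 (by norm_num) (by norm_num)
      (by norm_num) (by omega)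
  · exact key_12 f hmul hpara N hN hind p hp hp1 hp2 5 (by norm_num) (by norm_num)
      (by norm_num) (by omega)
end

section
/- Assume Goldbach's conjecture: every even integer greater than 2 is the sum of two primes. If f : ℕ → ℂ is multiplicative with f(0)=0 and satisfies f(p+q)+f(p−q)=2f(p)+2f(q) for all primes p ≥ q, then f(n)=n² for all n ∈ ℕ. -/
/-!
Instances of the law at small primes force `f 2 = 4` (otherwise `f` would vanish at `3`, `5` and
`7`, and then `f 1 = 0`), and from there the values at the primes below `17`. The rest is an
induction. An even `n ≥ 4` is a sum `p + q` of primes, and the law gives `f n` from `f p`, `f q`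
and `f (p - q)`. An odd prime `n ≥ 17` is paired with a prime `q ≤ 13` such that `12 ∣ n + q`;
then `n + q = 2 ^ a * t` with `4 ∣ 2 ^ a` and `t` an odd multiple of `3`, two coprime factors
small enough for the induction, and the law read backwards gives `f n`. An odd non-prime `n` is
recovered from `f (2 * n) = 4 * f n`.
-/

structure IsMultiplicativeParallelogram (f : ℕ → ℂ) : Prop where
  map_zero : f 0 = 0
  map_one : f 1 = 1
  map_mul_of_coprime : ∀ m n : ℕ, m.Coprime n → f (m * n) = f m * f n
  parallelogram : ∀ p q : ℕ, p.Prime → q.Prime → q ≤ p →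
    f (p + q) + f (p - q) = 2 * f p + 2 * f q

def GoldbachConjecture : Prop :=
  ∀ m : ℕ, 2 < m → Even m → ∃ p q : ℕ, p.Prime ∧ q.Prime ∧ m = p + q

lemma cast_add_sq_add_cast_sub_sq {p q : ℕ} (h : q ≤ p) :
    ((p + q : ℕ) : ℂ) ^ 2 + ((p - q : ℕ) : ℂ) ^ 2 = 2 * (p : ℂ) ^ 2 + 2 * (q : ℂ) ^ 2 := by
  push_cast [Nat.cast_sub h]
  ring

lemma exists_prime_add_four_le_twelve_dvd_add {n : ℕ} (hn : n.Prime) (h17 : 17 ≤ n) :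
    ∃ q : ℕ, q.Prime ∧ q + 4 ≤ n ∧ 12 ∣ n + q := by
  have h2 : ¬ 2 ∣ n := fun h => by have := hn.eq_one_or_self_of_dvd 2 h; omega
  have h3 : ¬ 3 ∣ n := fun h => by have := hn.eq_one_or_self_of_dvd 3 h; omega
  have : n % 12 = 1 ∨ n % 12 = 5 ∨ n % 12 = 7 ∨ n % 12 = 11 := by omega
  rcases this with h | h | h | h
  · exact ⟨11, by norm_num, by omega, by omega⟩
  · exact ⟨7, by norm_num, by omega, by omega⟩
  · exact ⟨5, by norm_num, by omega, by omega⟩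
  · exact ⟨13, by norm_num, by omega, by omega⟩

lemma exists_two_pow_mul_odd_of_twelve_dvd {m : ℕ} (hm : m ≠ 0) (h12 : 12 ∣ m) :
    ∃ a t : ℕ, m = 2 ^ a * t ∧ Odd t ∧ 2 ≤ a ∧ 3 ∣ t := by
  obtain ⟨a, t, ht, rfl⟩ := Nat.exists_eq_two_pow_mul_odd hm
  refine ⟨a, t, rfl, ht, ?_, ?_⟩
  · by_contra! ha
    obtain ⟨k, rfl⟩ := ht
    interval_cases a <;> omega
  · exact (Nat.Coprime.pow_right a (by norm_num : Nat.Coprime 3 2)).dvd_of_dvd_mul_left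
      (dvd_trans (by norm_num) h12)

/-- Odd non-primes `n` are reduced to `2 * n`, so they must rank above it. -/
def descentRank (n : ℕ) : ℕ := if Odd n ∧ ¬ n.Prime then 2 * n + 1 else n

lemma descentRank_le (n : ℕ) : descentRank n ≤ 2 * n + 1 := by
  unfold descentRank; split_ifs <;> omega

lemma descentRank_of_even {n : ℕ} (hn : Even n) : descentRank n = n :=
  if_neg fun h => Nat.not_odd_iff_even.2 hn h.1

lemma descentRank_of_prime {n : ℕ} (hn : n.Prime) : descentRank n = n :=
  if_neg fun h => h.2 hn

lemma descentRank_of_odd_of_not_prime {n : ℕ} (hn : Odd n) (hp : ¬ n.Prime) :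
    descentRank n = 2 * n + 1 :=
  if_pos ⟨hn, hp⟩

namespace IsMultiplicativeParallelogram

variable {f : ℕ → ℂ}

theorem apply_add_of_apply (hf : IsMultiplicativeParallelogram f) {p q : ℕ} (hp : p.Prime)
    (hq : q.Prime) (hqp : q ≤ p) (fp : f p = (p : ℂ) ^ 2) (fq : f q = (q : ℂ) ^ 2)
    (fsub : f (p - q) = ((p - q : ℕ) : ℂ) ^ 2) : f (p + q) = ((p + q : ℕ) : ℂ) ^ 2 := by
  linear_combination hf.parallelogram p q hp hq hqp + 2 * fp + 2 * fq - fsub -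
    cast_add_sq_add_cast_sub_sq hqp

theorem apply_of_apply_add (hf : IsMultiplicativeParallelogram f) {p q : ℕ} (hp : p.Prime)
    (hq : q.Prime) (hqp : q ≤ p) (fadd : f (p + q) = ((p + q : ℕ) : ℂ) ^ 2)
    (fsub : f (p - q) = ((p - q : ℕ) : ℂ) ^ 2) (fq : f q = (q : ℂ) ^ 2) :
    f p = (p : ℂ) ^ 2 := by
  linear_combination (-(1 / 2) : ℂ) * (hf.parallelogram p q hp hq hqp - fadd - fsub + 2 * fq -
    cast_add_sq_add_cast_sub_sq hqp)

theorem apply_mul_of_apply (hf : IsMultiplicativeParallelogram f) {m n : ℕ} (h : m.Coprime n)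
    (fm : f m = (m : ℂ) ^ 2) (fn : f n = (n : ℂ) ^ 2) : f (m * n) = ((m * n : ℕ) : ℂ) ^ 2 := by
  rw [hf.map_mul_of_coprime m n h, fm, fn]
  push_cast
  ring

theorem apply_eq_zero_of_apply_two_ne (hf : IsMultiplicativeParallelogram f) (h2 : f 2 ≠ 4)
    {p : ℕ} (hp : p.Prime) (hp2 : p ≠ 2) : f p = 0 := by
  have hdouble := hf.parallelogram p p hp hp le_rfl
  rw [Nat.sub_self, hf.map_zero, ← two_mul,
    hf.map_mul_of_coprime 2 p ((Nat.coprime_primes Nat.prime_two hp).2 hp2.symm)] at hdouble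
  have : (f 2 - 4) * f p = 0 := by linear_combination hdouble
  exact (mul_eq_zero.1 this).resolve_left (sub_ne_zero.2 h2)

theorem apply_two (hf : IsMultiplicativeParallelogram f) : f 2 = 4 := by
  by_contra h2
  have h32 := hf.parallelogram 3 2 (by norm_num) (by norm_num) (by norm_num)
  have h52 := hf.parallelogram 5 2 (by norm_num) (by norm_num) (by norm_num)
  norm_num [hf.map_one] at h32 h52
  have f3 := hf.apply_eq_zero_of_apply_two_ne h2 Nat.prime_three (by norm_num)
  have f5 := hf.apply_eq_zero_of_apply_two_ne h2 Nat.prime_five (by norm_num)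
  have f7 := hf.apply_eq_zero_of_apply_two_ne h2 (by norm_num : (7 : ℕ).Prime) (by norm_num)
  exact one_ne_zero (α := ℂ) (by linear_combination h32 - h52 - 3 * f5 + 3 * f3 + f7)

theorem apply_prime_of_lt_seventeen (hf : IsMultiplicativeParallelogram f) {p : ℕ}
    (hp : p.Prime) (h17 : p < 17) : f p = (p : ℂ) ^ 2 := by
  have para := hf.parallelogram
  have mul := hf.map_mul_of_coprime
  have f2 := hf.apply_two
  have h22 := para 2 2 (by norm_num) (by norm_num) le_rfl
  have h32 := para 3 2 (by norm_num) (by norm_num) (by norm_num)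
  have h33 := para 3 3 (by norm_num) (by norm_num) le_rfl
  have h52 := para 5 2 (by norm_num) (by norm_num) (by norm_num)
  have h53 := para 5 3 (by norm_num) (by norm_num) (by norm_num)
  have h75 := para 7 5 (by norm_num) (by norm_num) (by norm_num)
  have h113 := para 11 3 (by norm_num) (by norm_num) (by norm_num)
  have h137 := para 13 7 (by norm_num) (by norm_num) (by norm_num)
  have m43 := mul 4 3 (by norm_num)
  have m27 := mul 2 7 (by norm_num)
  have m23 := mul 2 3 (by norm_num)
  have m45 := mul 4 5 (by norm_num)
  norm_num [hf.map_zero, hf.map_one] at h22 h32 h33 h52 h53 h75 h113 h137 m43 m27 m23 m45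
  rw [f2] at h22 h32 h52 h53 h75 m27 m23
  have f4 : f 4 = 16 := by linear_combination h22
  rw [f4] at m43 m45
  have f3 : f 3 = 9 := by linear_combination h32 + (1 / 3 : ℂ) * h52 + (1 / 6 : ℂ) * (h75 - m43)
  have f5 : f 5 = 25 := by linear_combination h32 + 2 * f3
  have f7 : f 7 = 49 := by linear_combination h52 + 2 * f5 - f3
  have f8 : f 8 = 64 := by linear_combination h53 + 2 * f5 + 2 * f3
  have f11 : f 11 = 121 := by
    linear_combination (-(1 / 2) : ℂ) * (h113 - m27) + (1 / 2 : ℂ) * f8 - f3 + 2 * f7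
  have f13 : f 13 = 169 := by
    linear_combination (-(1 / 2) : ℂ) * (h137 - m45 - m23) - f7 + 8 * f5 + 2 * f3
  interval_cases p <;> norm_num at hp <;> norm_num [*]

theorem apply_of_even (hf : IsMultiplicativeParallelogram f) (goldbach : GoldbachConjecture)
    {n : ℕ} (hn : Even n) (ih : ∀ m, descentRank m < descentRank n → f m = (m : ℂ) ^ 2) :
    f n = (n : ℂ) ^ 2 := by
  rw [descentRank_of_even hn] at ih
  obtain rfl | rfl | h2 : n = 0 ∨ n = 2 ∨ 2 < n := by obtain ⟨k, rfl⟩ := hn; omega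
  · simp [hf.map_zero]
  · norm_num [hf.apply_two]
  obtain ⟨p, q, hp, hq, rfl⟩ := goldbach n h2 hn
  wlog hqp : q ≤ p generalizing p q
  · rw [add_comm] at hn h2 ih ⊢
    exact this q p hq hp hn ih h2 (by omega)
  have hp2 := hp.two_le
  have hq2 := hq.two_le
  have hsub : Even (p - q) := (Nat.even_sub hqp).2 (Nat.even_add.1 hn)
  refine hf.apply_add_of_apply hp hq hqp (ih p ?_) (ih q ?_) (ih (p - q) ?_)
  · rw [descentRank_of_prime hp]; omega
  · rw [descentRank_of_prime hq]; omega
  · rw [descentRank_of_even hsub]; omega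

theorem apply_of_prime (hf : IsMultiplicativeParallelogram f) {n : ℕ} (hn : n.Prime)
    (ih : ∀ m, descentRank m < descentRank n → f m = (m : ℂ) ^ 2) : f n = (n : ℂ) ^ 2 := by
  rw [descentRank_of_prime hn] at ih
  obtain h17 | h17 := lt_or_ge n 17
  · exact hf.apply_prime_of_lt_seventeen hn h17
  obtain ⟨q, hq, hqn, h12⟩ := exists_prime_add_four_le_twelve_dvd_add hn h17
  obtain ⟨a, t, hat, ht, ha, h3dvd⟩ :=
    exists_two_pow_mul_odd_of_twelve_dvd (by omega : n + q ≠ 0) h12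
  have h4a : 4 ≤ 2 ^ a := le_trans (by norm_num) (Nat.pow_le_pow_right two_pos ha)
  have h3t : 3 ≤ t := Nat.le_of_dvd ht.pos h3dvd
  have hsub : Even (n - q) := by
    rw [Nat.even_sub (by omega), Nat.even_iff, Nat.even_iff]; omega
  have f2a : f (2 ^ a) = ((2 ^ a : ℕ) : ℂ) ^ 2 := by
    refine ih _ ?_
    rw [descentRank_of_even ((Nat.even_pow' (by omega)).2 even_two)]
    nlinarith
  have ft : f t = (t : ℂ) ^ 2 := by
    refine ih _ (lt_of_le_of_lt (descentRank_le t) ?_)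
    nlinarith
  have fadd : f (n + q) = ((n + q : ℕ) : ℂ) ^ 2 := by
    rw [hat]
    exact hf.apply_mul_of_apply (Nat.Coprime.pow_left a (Nat.coprime_two_left.2 ht)) f2a ft
  refine hf.apply_of_apply_add hn hq (by omega) fadd (ih _ ?_) (ih _ ?_)
  · rw [descentRank_of_even hsub]; have := hq.two_le; omega
  · rw [descentRank_of_prime hq]; omega

theorem apply_of_odd_of_not_prime (hf : IsMultiplicativeParallelogram f) {n : ℕ} (hn : Odd n)
    (hp : ¬ n.Prime) (ih : ∀ m, descentRank m < descentRank n → f m = (m : ℂ) ^ 2) :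
    f n = (n : ℂ) ^ 2 := by
  have hdouble : f (2 * n) = ((2 * n : ℕ) : ℂ) ^ 2 := by
    refine ih _ ?_
    rw [descentRank_of_even (even_two_mul n), descentRank_of_odd_of_not_prime hn hp]
    omega
  rw [hf.map_mul_of_coprime 2 n (Nat.coprime_two_left.2 hn), hf.apply_two] at hdouble
  push_cast at hdouble
  linear_combination hdouble / 4

theorem apply_eq_sq (hf : IsMultiplicativeParallelogram f) (goldbach : GoldbachConjecture)
    (n : ℕ) : f n = (n : ℂ) ^ 2 := by
  induction n using (measure descentRank).wf.induction with
  | _ n ih =>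
    obtain hn | hn := Nat.even_or_odd n
    · exact hf.apply_of_even goldbach hn ih
    by_cases hp : n.Prime
    · exact hf.apply_of_prime hp ih
    · exact hf.apply_of_odd_of_not_prime hn hp ih

end IsMultiplicativeParallelogram

theorem stmt_13
    (goldbach : ∀ m : ℕ, 2 < m → Even m → ∃ p q : ℕ, Nat.Prime p ∧ Nat.Prime q ∧ m = p + q)
    (f : ℕ → ℂ) (hf0 : f 0 = 0) (hf1 : f 1 = 1)
    (hmul : ∀ m n : ℕ, Nat.Coprime m n → f (m * n) = f m * f n)
    (hpara : ∀ p q : ℕ, Nat.Prime p → Nat.Prime q → q ≤ p →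
      f (p + q) + f (p - q) = 2 * f p + 2 * f q) :
    ∀ n : ℕ, 0 < n → f n = (n : ℂ) ^ 2 :=
  fun n _ => IsMultiplicativeParallelogram.apply_eq_sq ⟨hf0, hf1, hmul, hpara⟩ goldbach n
end

section
/- Assume Goldbach's conjecture. Let f : ℕ → ℂ be multiplicative with f(0)=0 satisfying the parallelogram equation on primes, and suppose f(n)=n² for all n ≤ N with N ≥ 20. If N+1 = 2^e for some e ≥ 1, then f(N+1)=(N+1)². -/
theorem stmt_14
    (goldbach : ∀ m : ℕ, 2 < m → Even m → ∃ p q : ℕ, Nat.Prime p ∧ Nat.Prime q ∧ m = p + q)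
    (f : ℕ → ℂ) (hf0 : f 0 = 0) (hf1 : f 1 = 1)
    (hmul : ∀ m n : ℕ, Nat.Coprime m n → f (m * n) = f m * f n)
    (hpara : ∀ p q : ℕ, Nat.Prime p → Nat.Prime q → q ≤ p →
      f (p + q) + f (p - q) = 2 * f p + 2 * f q) (N : ℕ) (hN : 20 ≤ N)
    (hind : ∀ n : ℕ, n ≤ N → f n = (n : ℂ) ^ 2)
    (e : ℕ) (he : 1 ≤ e) (hNe : N + 1 = 2 ^ e) :
    f (N + 1) = ((N + 1 : ℕ) : ℂ) ^ 2 := by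
  have heven : Even (N + 1) := by
    rw [hNe]
    exact (Nat.even_pow.mpr ⟨even_two, by omega⟩)
  obtain ⟨p, q, hp, hq, hpq⟩ := goldbach (N + 1) (by omega) heven
  have hp2 := hp.two_le
  have hq2 := hq.two_le
  rcases le_total q p with h | h
  · have key := hpara p q hp hq h
    rw [← hpq, hind (p - q) (by omega), hind p (by omega), hind q (by omega),
      Nat.cast_sub h] at key
    have hc : ((N + 1 : ℕ) : ℂ) = (p : ℂ) + q := by push_cast [hpq]; ring
    rw [hc]
    linear_combination key
  · have key := hpara q p hq hp h
    rw [add_comm q p, ← hpq, hind (q - p) (by omega), hind p (by omega), hind q (by omega),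
      Nat.cast_sub h] at key
    have hc : ((N + 1 : ℕ) : ℂ) = (p : ℂ) + q := by push_cast [hpq]; ring
    rw [hc]
    linear_combination key
end

section
/- Let f : ℕ → ℂ be multiplicative with f(0)=0 satisfying the parallelogram equation on primes, and suppose f(n)=n² for all n ≤ N with N ≥ 20. If N+1 is prime, then f(N+1)=(N+1)². -/
lemma stmt_15_key (f : ℕ → ℂ)
    (hmul : ∀ m n : ℕ, Nat.Coprime m n → f (m * n) = f m * f n)
    (hpara : ∀ p q : ℕ, Nat.Prime p → Nat.Prime q → q ≤ p →
      f (p + q) + f (p - q) = 2 * f p + 2 * f q) (N : ℕ) (hN : 20 ≤ N)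
    (hind : ∀ n : ℕ, n ≤ N → f n = (n : ℂ) ^ 2)
    (hNp : Nat.Prime (N + 1)) (q : ℕ) (hq : Nat.Prime q) (hq5 : q ≤ 5)
    (hmod : (N + 1 + q) % 4 = 2) :
    f (N + 1) = ((N + 1 : ℕ) : ℂ) ^ 2 := by
  have hq2 := hq.two_le
  set m := (N + 1 + q) / 2 with hm
  have hm2 : N + 1 + q = 2 * m := by omega
  have hcop : Nat.Coprime 2 m := (Nat.prime_two.coprime_iff_not_dvd).mpr (by omega)
  have h1 : f (N + 1 + q) = ((N + 1 + q : ℕ) : ℂ) ^ 2 := by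
    rw [hm2, hmul 2 m hcop, hind 2 (by omega), hind m (by omega)]
    push_cast
    ring
  have h2 := hpara (N + 1) q hNp hq (by omega)
  rw [h1, hind (N + 1 - q) (by omega), hind q (by omega)] at h2
  have hsub : ((N + 1 - q : ℕ) : ℂ) = (N : ℂ) + 1 - q := by
    push_cast [Nat.cast_sub (show q ≤ N + 1 by omega)]
    ring
  rw [hsub] at h2
  push_cast at h2 ⊢
  linear_combination -h2 / 2

theorem stmt_15 (f : ℕ → ℂ) (hf0 : f 0 = 0) (hf1 : f 1 = 1)
    (hmul : ∀ m n : ℕ, Nat.Coprime m n → f (m * n) = f m * f n)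
    (hpara : ∀ p q : ℕ, Nat.Prime p → Nat.Prime q → q ≤ p →
      f (p + q) + f (p - q) = 2 * f p + 2 * f q) (N : ℕ) (hN : 20 ≤ N)
    (hind : ∀ n : ℕ, n ≤ N → f n = (n : ℂ) ^ 2)
    (hNp : Nat.Prime (N + 1)) :
    f (N + 1) = ((N + 1 : ℕ) : ℂ) ^ 2 := by
  have hodd : (N + 1) % 2 = 1 := Nat.odd_iff.mp (hNp.odd_of_ne_two (by omega))
  by_cases h4 : N % 4 = 0
  · exact stmt_15_key f hmul hpara N hN hind hNp 5 (by norm_num) (by norm_num) (by omega)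
  · exact stmt_15_key f hmul hpara N hN hind hNp 3 (by norm_num) (by norm_num) (by omega)
end
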